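/- arXiv:2512.06611 — 4 statements merged into one kernel-verified Lean document; each statement's English description precedes it below -/
import Mathlib

section
/- For a matroid M on finite ground set N with distinct element weights, an element i improves a set S (i.e., i belongs to the max-weight basis of S ∪ {i}) if and only if i is not in the span of {j ∈ S : w(j) > w(i)}. -/
open Set Finset

/-- `B` is the max-weight basis `OPT(S, M)` of `S` w.r.t. weights `w`:
an independent subset of `S` of maximum total weight. -/
def IsMaxWeightBasis {α : Type*} (M : Matroid α) (w : α → ℝ) (S B : Finset α) : Prop :=
  B ⊆ S ∧ M.Indep ↑B ∧ ∀ B' : Finset α, B' ⊆ S → M.Indep ↑B' → ∑ j ∈ B', w j ≤ ∑ j ∈ B, w j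

lemma aug_chain {α : Type*} [DecidableEq α] (M : Matroid α) :
    ∀ n (I J : Finset α), M.Indep ↑I → M.Indep ↑J → I.card ≤ J.card → J.card - I.card = n →
      ∃ K : Finset α, I ⊆ K ∧ K ⊆ I ∪ J ∧ M.Indep ↑K ∧ K.card = J.card := by
  intro n
  induction n with
  | zero =>
    intro I J hI _ hle h0
    exact ⟨I, Finset.Subset.refl _, Finset.subset_union_left, hI, by omega⟩
  | succ n ih =>
    intro I J hI hJ hle hn
    have hlt : I.card < J.card := by omega
    obtain ⟨e, he, hins⟩ := hI.augment hJ (by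
      rw [Set.encard_coe_eq_coe_finsetCard, Set.encard_coe_eq_coe_finsetCard]
      exact_mod_cast hlt)
    have heJ : e ∈ J := by simpa using he.1
    have heI : e ∉ I := by simpa using he.2
    have hcoe : ((insert e I : Finset α) : Set α) = insert e (↑I : Set α) := by simp
    obtain ⟨K, h1, h2, h3, h4⟩ := ih (insert e I) J (by rw [hcoe]; exact hins) hJ
      (by rw [Finset.card_insert_of_notMem heI]; omega)
      (by rw [Finset.card_insert_of_notMem heI]; omega)
    refine ⟨K, (Finset.subset_insert _ _).trans h1, h2.trans ?_, h3, h4⟩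
    intro x hx
    simp only [Finset.mem_union, Finset.mem_insert] at hx ⊢
    rcases hx with (h | h) | h
    · exact Or.inr (h ▸ heJ)
    · exact Or.inl h
    · exact Or.inr h

/-- for a matroid `M` on a finite ground set with distinct (nonnegative)
weights, an element `i` improves a set `S` (i.e. `i` belongs to the max-weight basis of
`S ∪ {i}`) iff `i` is not in the span of `{j ∈ S : w j > w i}`. -/
theorem improves_iff_not_mem_span {α : Type*} [Fintype α] [DecidableEq α]
    (M : Matroid α) (hE : M.E = Set.univ) (w : α → ℝ)
    (hw : Function.Injective w) (hw0 : ∀ a, 0 ≤ w a)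
    (S : Finset α) (i : α) :
    (∃ B : Finset α, IsMaxWeightBasis M w (insert i S) B ∧ i ∈ B) ↔
      i ∉ M.closure {j | j ∈ S ∧ w i < w j} := by
  classical
  set H : Set α := {j | j ∈ S ∧ w i < w j} with hH
  constructor
  · rintro ⟨B, ⟨hBsub, hBind, hBmax⟩, hiB⟩ hcl
    set I : Finset α := B.erase i with hI
    have hIcoe : (↑I : Set α) = (↑B : Set α) \ {i} := by simp [hI]
    have hIind : M.Indep ↑I := hBind.subset (by rw [hIcoe]; exact Set.diff_subset)
    -- find j ∈ H outside the closure of I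
    have hex : ∃ j ∈ H, j ∉ M.closure ↑I := by
      by_contra hcon
      push_neg at hcon
      have hsub : H ⊆ M.closure ↑I := fun j hj => hcon j hj
      have : i ∈ M.closure ↑I :=
        M.closure_subset_closure_of_subset_closure hsub hcl
      rw [hIcoe] at this
      exact hBind.notMem_closure_diff_of_mem hiB this
    obtain ⟨j, ⟨hjS, hji⟩, hjcl⟩ := hex
    have hjI : j ∉ I := fun h => hjcl (M.subset_closure ↑I (by rw [hE]; exact Set.subset_univ _) h)
    have hins : M.Indep (insert j (↑I : Set α)) := by
      rw [hIind.insert_indep_iff_of_notMem (by simpa using hjI)]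
      exact ⟨by rw [hE]; trivial, hjcl⟩
    have hcoe : ((insert j I : Finset α) : Set α) = insert j (↑I : Set α) := by simp
    have hsub' : insert j I ⊆ insert i S := by
      intro x hx
      rcases Finset.mem_insert.1 hx with h | h
      · exact Finset.mem_insert_of_mem (h ▸ hjS)
      · exact hBsub (Finset.erase_subset _ _ h)
    have hle := hBmax (insert j I) hsub' (by rw [hcoe]; exact hins)
    rw [Finset.sum_insert hjI] at hle
    have hsumB : ∑ x ∈ B, w x = w i + ∑ x ∈ I, w x := (Finset.add_sum_erase _ w hiB).symm
    rw [hsumB] at hle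
    linarith
  · intro hcl
    -- take a max-weight independent subset of insert i S
    set T : Finset (Finset α) :=
      ((insert i S).powerset).filter (fun B => M.Indep ↑B) with hT
    have hne : T.Nonempty := ⟨∅, by simp [hT, M.empty_indep]⟩
    obtain ⟨B, hBT, hBmax'⟩ := T.exists_max_image (fun B => ∑ j ∈ B, w j) hne
    simp only [hT, Finset.mem_filter, Finset.mem_powerset] at hBT
    obtain ⟨hBsub, hBind⟩ := hBT
    have hBmax : ∀ B' : Finset α, B' ⊆ insert i S → M.Indep ↑B' →
        ∑ j ∈ B', w j ≤ ∑ j ∈ B, w j := by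
      intro B' h1 h2
      exact hBmax' B' (by simp [hT, h1, h2])
    by_cases hiB : i ∈ B
    · exact ⟨B, ⟨hBsub, hBind, hBmax⟩, hiB⟩
    by_cases hind : M.Indep (insert i (↑B : Set α))
    · refine ⟨insert i B, ⟨Finset.insert_subset_iff.2 ⟨Finset.mem_insert_self _ _, hBsub⟩, by simpa using hind, ?_⟩,
        Finset.mem_insert_self _ _⟩
      intro B' h1 h2
      have := hBmax B' h1 h2
      rw [Finset.sum_insert hiB]
      have := hw0 i
      linarith
    · exfalso
      have hicl : i ∈ M.closure ↑B := by
        by_contra hicl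
        exact hind ((hBind.insert_indep_iff_of_notMem (by simpa using hiB)).2
          ⟨by rw [hE]; trivial, hicl⟩)
      set B₁ : Finset α := B.filter (fun j => w i < w j) with hB₁
      have hB₁H : (↑B₁ : Set α) ⊆ H := by
        intro x hx
        simp only [hB₁, Finset.coe_filter, Set.mem_setOf_eq] at hx
        obtain ⟨hxB, hxw⟩ := hx
        have hxS : x ∈ S := by
          rcases Finset.mem_insert.1 (hBsub hxB) with h | h
          · exact absurd (h ▸ hxB) hiB
          · exact h
        exact ⟨hxS, hxw⟩
      have hiB₁cl : i ∉ M.closure ↑B₁ :=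
        fun h => hcl (M.closure_subset_closure hB₁H h)
      have hB₁ind : M.Indep ↑B₁ := hBind.subset (by
        simp only [hB₁]; exact_mod_cast Finset.filter_subset _ _)
      have hiB₁ : i ∉ B₁ := fun h => hiB (Finset.filter_subset _ _ h)
      have hCind : M.Indep (insert i (↑B₁ : Set α)) := by
        rw [hB₁ind.insert_indep_iff_of_notMem (by simpa using hiB₁)]
        exact ⟨by rw [hE]; trivial, hiB₁cl⟩
      have hCcoe : ((insert i B₁ : Finset α) : Set α) = insert i (↑B₁ : Set α) := by simp
      have hB₁ne : B₁ ≠ B := by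
        intro h
        exact hiB₁cl (h ▸ hicl)
      have hB₁lt : B₁.card < B.card :=
        Finset.card_lt_card (lt_of_le_of_ne (Finset.filter_subset _ _) hB₁ne)
      have hCcard : (insert i B₁).card ≤ B.card := by
        rw [Finset.card_insert_of_notMem hiB₁]; omega
      obtain ⟨K, hK1, hK2, hK3, hK4⟩ := aug_chain M (B.card - (insert i B₁).card)
        (insert i B₁) B (by rw [hCcoe]; exact hCind) hBind hCcard rfl
      have hiK : i ∈ K := hK1 (Finset.mem_insert_self _ _)
      have hKsub : K ⊆ insert i B := by
        refine hK2.trans ?_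
        intro x hx
        rcases Finset.mem_union.1 hx with h | h
        · rcases Finset.mem_insert.1 h with h | h
          · exact Finset.mem_insert.2 (Or.inl h)
          · exact Finset.mem_insert_of_mem (Finset.filter_subset _ _ h)
        · exact Finset.mem_insert_of_mem h
      have hKerase : K.erase i ⊆ B := by
        intro x hx
        obtain ⟨hxi, hxK⟩ := Finset.mem_erase.1 hx
        rcases Finset.mem_insert.1 (hKsub hxK) with h | h
        · exact absurd h hxi
        · exact h
      have hKec : (K.erase i).card = B.card - 1 := by
        rw [Finset.card_erase_of_mem hiK, hK4]
      have hBpos : 1 ≤ B.card := by omega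
      have hDcard : (B \ K.erase i).card = 1 := by
        rw [Finset.card_sdiff_of_subset hKerase, hKec]; omega
      obtain ⟨k, hk⟩ := Finset.card_eq_one.1 hDcard
      have hkB : k ∈ B := by
        have : k ∈ B \ K.erase i := hk ▸ Finset.mem_singleton_self k
        exact (Finset.mem_sdiff.1 this).1
      have hkK : k ∉ K.erase i := by
        have : k ∈ B \ K.erase i := hk ▸ Finset.mem_singleton_self k
        exact (Finset.mem_sdiff.1 this).2
      have hki : k ≠ i := fun h => hiB (h ▸ hkB)
      have hkB₁ : k ∉ B₁ := by
        intro h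
        exact hkK (Finset.mem_erase.2 ⟨hki, hK1 (Finset.mem_insert_of_mem h)⟩)
      have hkw : w k < w i := by
        have h1 : ¬ (w i < w k) := by
          intro h
          exact hkB₁ (Finset.mem_filter.2 ⟨hkB, h⟩)
        have h2 : w k ≠ w i := fun h => hki (hw h)
        rcases lt_or_eq_of_le (le_of_not_gt h1) with h | h
        · exact h
        · exact absurd h h2
      -- sum comparisons
      have hsumK : ∑ x ∈ K, w x = w i + ∑ x ∈ K.erase i, w x :=
        (Finset.add_sum_erase _ w hiK).symm
      have hsumB : ∑ x ∈ B, w x = w k + ∑ x ∈ K.erase i, w x := by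
        have := Finset.sum_sdiff (f := w) hKerase
        rw [hk, Finset.sum_singleton] at this
        linarith [this]
      have hKS : K ⊆ insert i S := by
        refine hKsub.trans ?_
        exact Finset.insert_subset_iff.2 ⟨Finset.mem_insert_self _ _, hBsub⟩
      have := hBmax K hKS hK3
      rw [hsumK, hsumB] at this
      linarith
end

section
/- For any matroid M on finite ground set N and any S ⊆ N, the maximum over subsets T ⊆ S of ⌈|T| / rank(T)⌉ equals the maximum over flats F of M of ⌈|S ∩ F| / rank(F)⌉ (where terms with rank 0 are excluded or treated as 0 when the numerator is 0). -/
/-!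
A nonempty `T ⊆ S` is dominated by the flat `cl T`, which has the same rank and meets `S` in a
superset of `T`; a flat `F` is dominated by `T = S ∩ F`, whose rank is at most `ρ(F)`.
Looplessness of `S` keeps every rank in these comparisons positive.
-/

open Set

/-- The rank `ρ(X, M)`: the maximum size of an independent subset of `X`. -/
noncomputable def matRank {α : Type*} (M : Matroid α) (X : Set α) : ℕ :=
  sSup {n | ∃ I, I ⊆ X ∧ M.Indep I ∧ I.ncard = n}

namespace Matroid

variable {α : Type*} [Finite α] {M : Matroid α} {X Y : Set α}

theorem matRank_eq_toNat_eRk (M : Matroid α) (X : Set α) : matRank M X = (M.eRk X).toNat := by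
  obtain ⟨I, hI⟩ := M.exists_isBasis' X
  refine IsGreatest.csSup_eq ⟨⟨I, hI.subset, hI.indep, ?_⟩, ?_⟩
  · rw [hI.eRk_eq_encard, ncard_def]
  · rintro _ ⟨J, hJX, hJ, rfl⟩
    rw [ncard_def]
    exact ENat.toNat_le_toNat (hJ.encard_le_eRk_of_subset hJX)
      (eRk_ne_top_iff.2 (M.isRkFinite_set X))

theorem matRank_closure (M : Matroid α) (X : Set α) : matRank M (M.closure X) = matRank M X := by
  simp only [matRank_eq_toNat_eRk, eRk_closure_eq]

theorem matRank_mono (M : Matroid α) (h : X ⊆ Y) : matRank M X ≤ matRank M Y := by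
  simp only [matRank_eq_toNat_eRk]
  exact ENat.toNat_le_toNat (M.eRk_mono h) (eRk_ne_top_iff.2 (M.isRkFinite_set Y))

theorem matRank_pos_of_mem {a : α} (ha : a ∈ X) (hind : M.Indep {a}) : 0 < matRank M X :=
  calc 0 < matRank M {a} := by simp [matRank_eq_toNat_eRk, hind.eRk_eq_encard]
    _ ≤ matRank M X := M.matRank_mono (singleton_subset_iff.2 ha)

end Matroid

theorem Nat.ceil_div_le_ceil_div {K : Type*} [Field K] [LinearOrder K] [IsStrictOrderedRing K]
    [FloorSemiring K] {a b r s : ℕ} (hab : a ≤ b) (hs : 0 < s) (hsr : s ≤ r) :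
    ⌈(a : K) / r⌉₊ ≤ ⌈(b : K) / s⌉₊ :=
  Nat.ceil_mono <| div_le_div₀ (by positivity) (by exact_mod_cast hab) (by exact_mod_cast hs)
    (by exact_mod_cast hsr)

theorem bddAbove_setOf_exists_and_and_eq {β : Type*} [Finite β] (P Q : β → Prop) (f : β → ℕ) :
    BddAbove {m | ∃ x, P x ∧ Q x ∧ m = f x} :=
  (finite_range f).subset (by rintro _ ⟨x, -, -, rfl⟩; exact mem_range_self x) |>.bddAbove

theorem max_ceil_subsets_eq_max_ceil_flats_general {α : Type*} [Fintype α]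
    (M : Matroid α) (S : Set α)
    (hloopless : ∀ a ∈ S, M.Indep {a}) :
    sSup {m : ℕ | ∃ T, T ⊆ S ∧ T.Nonempty ∧ m = ⌈(T.ncard : ℚ) / (matRank M T : ℚ)⌉₊} =
      sSup {m : ℕ | ∃ F, M.IsFlat F ∧ 0 < matRank M F ∧
        m = ⌈((S ∩ F).ncard : ℚ) / (matRank M F : ℚ)⌉₊} := by
  have hSE : S ⊆ M.E := fun a ha ↦ (hloopless a ha).subset_ground rfl
  apply le_antisymm
  · refine csSup_le' ?_
    rintro _ ⟨T, hTS, ⟨a, haT⟩, rfl⟩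
    have hT : 0 < matRank M T := Matroid.matRank_pos_of_mem haT (hloopless a (hTS haT))
    refine le_csSup_of_le (bddAbove_setOf_exists_and_and_eq _ _ _)
      ⟨M.closure T, M.isFlat_closure T, ?_, rfl⟩ ?_
    · rwa [M.matRank_closure]
    · rw [M.matRank_closure]
      exact Nat.ceil_div_le_ceil_div (ncard_le_ncard (subset_inter hTS
        (M.subset_closure T (hTS.trans hSE)))) hT le_rfl
  · refine csSup_le' ?_
    rintro _ ⟨F, -, -, rfl⟩
    obtain h | ⟨a, haS, haF⟩ := (S ∩ F).eq_empty_or_nonempty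
    · simp [h]
    refine le_csSup_of_le (bddAbove_setOf_exists_and_and_eq _ _ _)
      ⟨S ∩ F, inter_subset_left, ⟨a, haS, haF⟩, rfl⟩ ?_
    exact Nat.ceil_div_le_ceil_div le_rfl
      (Matroid.matRank_pos_of_mem ⟨haS, haF⟩ (hloopless a haS)) (M.matRank_mono inter_subset_right)

/-- for a matroid `M` on a finite ground set and a nonempty loopless `S`,
the maximum of `⌈|T| / ρ(T)⌉` over nonempty `T ⊆ S` equals the maximum of
`⌈|S ∩ F| / ρ(F)⌉` over flats `F` of positive rank. -/
theorem max_ceil_subsets_eq_max_ceil_flats {α : Type*} [Fintype α]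
    (M : Matroid α) (hE : M.E = Set.univ) (S : Set α) (hS : S.Nonempty)
    (hloopless : ∀ a ∈ S, M.Indep {a}) :
    sSup {m : ℕ | ∃ T, T ⊆ S ∧ T.Nonempty ∧ m = ⌈(T.ncard : ℚ) / (matRank M T : ℚ)⌉₊} =
      sSup {m : ℕ | ∃ F, M.IsFlat F ∧ 0 < matRank M F ∧
        m = ⌈((S ∩ F).ncard : ℚ) / (matRank M F : ℚ)⌉₊} :=
  max_ceil_subsets_eq_max_ceil_flats_general M S hloopless
end

section
/- Symmetry lemma for improving elements: let elements 1,…,n have strictly decreasing weights, let X₁,…,Xₙ and Y₁,…,Yₙ be mutually independent Bernoulli random variables with P(Xᵢ=1)=2p and P(Yᵢ=1)=1/2, and set S = {i : Xᵢ=1, Yᵢ=1}, T = {i : Xᵢ=1, Yᵢ=0}. Let T* ⊆ T be the elements of T that improve S w.r.t. a matroid M' and S* the max-weight basis of S in M'. Then E[w(T*)] = E[w(S*)]. -/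
open MeasureTheory ProbabilityTheory Finset Classical

noncomputable section

/-- The max-weight basis `OPT(S, M)` (a choice of one; it is unique for distinct
weights). -/
noncomputable def OPT {α : Type*} (M : Matroid α) (w : α → ℝ) (S : Finset α) : Finset α :=
  if h : ∃ B, IsMaxWeightBasis M w S B then h.choose else ∅

/-- `i` improves `S` w.r.t. `M`: `i` belongs to the max-weight basis of `S ∪ {i}`. -/
noncomputable def Improves {α : Type*} [DecidableEq α] (M : Matroid α) (w : α → ℝ)
    (i : α) (S : Finset α) : Prop :=
  i ∈ OPT M w (insert i S)

/-!
For distinct weights, the max-weight basis of `A` is the greedy one: an element `i ∈ A` of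
positive weight lies in `OPT(A)` iff it is not spanned by the heavier elements of `A`. Hence
both `i ∈ T*` and `i ∈ S*` are the event `Gᵢ ∩ {Yᵢ = b}` (with `b = 0`, resp. `b = 1`), where
`Gᵢ = {Xᵢ = 1, w i > 0, i ∉ σ(S ∩ {j : w j > w i})}` is determined by the variables other than `Yᵢ`.
By independence and `P(Yᵢ = 0) = P(Yᵢ = 1)` the two events have the same probability, and
linearity of expectation sums this over `i`.
-/

theorem Finset.sum_filter_congr_of_ne_zero {ι β : Type*} [AddCommMonoid β] {s : Finset ι}
    {p q : ι → Prop} [DecidablePred p] [DecidablePred q] {f : ι → β}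
    (h : ∀ i ∈ s, f i ≠ 0 → (p i ↔ q i)) :
    ∑ i ∈ s with p i, f i = ∑ i ∈ s with q i, f i := by
  rw [sum_filter, sum_filter]
  refine sum_congr rfl fun i hi => ?_
  by_cases hf : f i = 0
  · simp [hf]
  · simp only [h i hi hf]

section MaxWeightBasis

variable {α : Type*} {M : Matroid α} {w : α → ℝ} {A B : Finset α} {i j : α}

theorem exists_isMaxWeightBasis (M : Matroid α) (w : α → ℝ) (A : Finset α) :
    ∃ B, IsMaxWeightBasis M w A B := by
  obtain ⟨B, hB, hmax⟩ :=
    (A.powerset.filter fun B : Finset α => M.Indep (↑B : Set α)).exists_max_image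
      (fun B => ∑ j ∈ B, w j) ⟨∅, by simp⟩
  simp only [mem_filter, mem_powerset] at hB hmax
  exact ⟨B, hB.1, hB.2, fun B' hB'A hB' => hmax B' ⟨hB'A, hB'⟩⟩

theorem isMaxWeightBasis_OPT (M : Matroid α) (w : α → ℝ) (A : Finset α) :
    IsMaxWeightBasis M w A (OPT M w A) := by
  rw [OPT, dif_pos (exists_isMaxWeightBasis M w A)]
  exact (exists_isMaxWeightBasis M w A).choose_spec

namespace IsMaxWeightBasis

theorem nonneg_of_mem (hB : IsMaxWeightBasis M w A B) (hiB : i ∈ B) : 0 ≤ w i := by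
  have := hB.2.2 (B.erase i) ((erase_subset i B).trans hB.1) (hB.2.1.subset (by simp))
  rw [sum_erase_eq_sub hiB] at this
  linarith

theorem nonpos_of_insert_indep (hB : IsMaxWeightBasis M w A B) (hiA : i ∈ A) (hiB : i ∉ B)
    (hind : M.Indep (insert i ↑B)) : w i ≤ 0 := by
  have := hB.2.2 (insert i B) (insert_subset hiA hB.1) (by rwa [coe_insert])
  rw [sum_insert hiB] at this
  linarith

theorem le_of_exchange_indep (hB : IsMaxWeightBasis M w A B) (hiA : i ∈ A) (hiB : i ∉ B)
    (hjB : j ∈ B) (hind : M.Indep (insert i (↑B \ {j}))) : w i ≤ w j := by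
  have := hB.2.2 (insert i (B.erase j)) (insert_subset hiA ((erase_subset j B).trans hB.1))
    (by rwa [coe_insert, coe_erase])
  rw [sum_insert fun h => hiB (mem_of_mem_erase h), sum_erase_eq_sub hjB] at this
  linarith

theorem mem_iff_notMem_closure (hB : IsMaxWeightBasis M w A B) (hw : Function.Injective w)
    (hiA : i ∈ A) (hwi : 0 < w i) :
    i ∈ B ↔ i ∈ M.E \ M.closure ↑(A.filter (w i < w ·)) := by
  have hBi := hB.2.1
  constructor
  -- Some heavier `j` is independent of `B \ {i}`, and trading `i` for `j` would increase `w(B)`.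
  · intro hiB
    refine ⟨hBi.subset_ground (by simpa using hiB), fun hiH => ?_⟩
    obtain ⟨j, ⟨hjH, hjE⟩, hjcl⟩ :
        ∃ j ∈ ↑(A.filter (w i < w ·)) ∩ M.E, j ∉ M.closure (↑B \ {i}) := by
      by_contra! h
      refine hBi.notMem_closure_sdiff_of_mem (by simpa using hiB) ?_
      exact M.closure_subset_closure_of_subset_closure h (by rwa [Matroid.closure_inter_ground])
    obtain ⟨hjA, hij⟩ := mem_filter.1 hjH
    have hjB : j ∉ B := fun hjB => hjcl <| M.subset_closure _ (hBi.sdiff {i}).subset_ground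
      ⟨hjB, fun h => hij.ne' (congrArg w h)⟩
    have := hB.le_of_exchange_indep hjA hjB hiB
      (((hBi.sdiff _).insert_indep_iff_of_notMem fun h => hjB h.1).2 ⟨hjE, hjcl⟩)
    linarith
  -- Otherwise `i` may be added to `B`, or it may replace an element of its fundamental circuit
  -- that is not heavier, hence (weights being distinct) lighter.
  · rintro ⟨hiE, hiH⟩
    by_contra hiB
    by_cases hcl : i ∈ M.closure ↑B
    · have hC := hBi.fundCircuit_isCircuit hcl (by simpa using hiB)
      obtain ⟨j, hjC, hjH⟩ : ∃ j ∈ M.fundCircuit i ↑B \ {i}, j ∉ A.filter (w i < w ·) := by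
        by_contra! h
        exact hiH (M.closure_subset_closure (fun j hj => by simpa using h j hj)
          (hC.mem_closure_sdiff_singleton_of_mem (M.mem_fundCircuit i ↑B)))
      have hji : j ≠ i := hjC.2
      have hjB : j ∈ B := by
        simpa [hji] using M.fundCircuit_subset_insert i ↑B hjC.1
      have hle := hB.le_of_exchange_indep hiA hiB hjB (by
        rw [Set.insert_sdiff_singleton_comm hji.symm]
        exact (hBi.mem_fundCircuit_iff hcl (by simpa using hiB)).1 hjC.1)
      have hlt : w j < w i := lt_of_le_of_ne
        (not_lt.1 fun h => hjH (mem_filter.2 ⟨hB.1 hjB, h⟩)) (hw.ne hji)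
      linarith
    · exact hwi.not_ge (hB.nonpos_of_insert_indep hiA hiB
        ((hBi.insert_indep_iff_of_notMem (by simpa using hiB)).2 ⟨hiE, hcl⟩))

end IsMaxWeightBasis

theorem mem_OPT_iff_of_ne_zero (hw : Function.Injective w) (hwi : w i ≠ 0) :
    i ∈ OPT M w A ↔ i ∈ A ∧ 0 < w i ∧ i ∈ M.E \ M.closure ↑(A.filter (w i < w ·)) := by
  have hB := isMaxWeightBasis_OPT M w A
  by_cases hiA : i ∈ A
  · rcases hwi.lt_or_gt with hneg | hpos
    · simp only [hiA, true_and, hneg.not_gt, false_and, iff_false]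
      exact fun hiB => hneg.not_ge (hB.nonneg_of_mem hiB)
    · simp only [hiA, hpos, true_and]
      exact hB.mem_iff_notMem_closure hw hiA hpos
  · simp only [hiA, false_and, iff_false]
    exact fun hiB => hiA (hB.1 hiB)

theorem improves_iff_of_ne_zero [DecidableEq α] {S : Finset α} (hw : Function.Injective w)
    (hwi : w i ≠ 0) :
    Improves M w i S ↔ 0 < w i ∧ i ∈ M.E \ M.closure ↑(S.filter (w i < w ·)) := by
  rw [Improves, mem_OPT_iff_of_ne_zero hw hwi, filter_insert, if_neg (lt_irrefl _)]
  simp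

end MaxWeightBasis

theorem Set.preimage_image_eq_of_saturated {α β : Type*} {f : α → β} {s : Set α}
    (h : ∀ a b, f a = f b → a ∈ s → b ∈ s) : f ⁻¹' (f '' s) = s :=
  subset_antisymm (fun b ⟨a, ha, hab⟩ => h a b hab ha) (subset_preimage_image f s)

section Independence

variable {Ω ι β : Type*} [Fintype ι] {Z : ι → Ω → β} {k : ι} {G : Set Ω}

theorem eq_preimage_image_of_saturated
    (hG : ∀ ω ω', (∀ j ≠ k, Z j ω = Z j ω') → ω ∈ G → ω' ∈ G) :
    G = (fun ω (j : univ.erase k) => Z j ω) ⁻¹' ((fun ω (j : univ.erase k) => Z j ω) '' G) := by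
  refine (Set.preimage_image_eq_of_saturated fun ω ω' h => hG ω ω' fun j hj => ?_).symm
  exact congrFun h ⟨j, mem_erase.2 ⟨hj, mem_univ j⟩⟩

variable [MeasurableSpace Ω] {μ : Measure Ω} [MeasurableSpace β] [Countable β]
  [MeasurableSingletonClass β]

theorem measurableSet_of_saturated (hmZ : ∀ j, Measurable (Z j))
    (hG : ∀ ω ω', (∀ j ≠ k, Z j ω = Z j ω') → ω ∈ G → ω' ∈ G) : MeasurableSet G := by
  rw [eq_preimage_image_of_saturated hG]
  exact (measurable_pi_lambda _ fun j : univ.erase k => hmZ j) MeasurableSet.of_discrete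

theorem ProbabilityTheory.iIndepFun.measure_inter_preimage_eq_mul_of_saturated
    (hZ : iIndepFun Z μ) (hmZ : ∀ j, Measurable (Z j))
    (hG : ∀ ω ω', (∀ j ≠ k, Z j ω = Z j ω') → ω ∈ G → ω' ∈ G) (t : Set β) :
    μ (G ∩ Z k ⁻¹' t) = μ G * μ (Z k ⁻¹' t) := by
  have hind : IndepFun (fun ω (j : univ.erase k) => Z j ω) (Z k) μ :=
    (hZ.indepFun_finset _ {k} (by simp) hmZ).comp measurable_id
      (measurable_pi_apply ⟨k, mem_singleton_self k⟩)
  rw [eq_preimage_image_of_saturated hG]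
  exact hind.measure_inter_preimage_eq_mul _ _ MeasurableSet.of_discrete
    MeasurableSet.of_discrete

end Independence

theorem measure_preimage_false_eq_true {Ω : Type*} [MeasurableSpace Ω] {μ : Measure Ω}
    [IsProbabilityMeasure μ] {Y : Ω → Bool} (hmY : Measurable Y)
    (hY : μ {ω | Y ω = true} = 1 / 2) :
    μ (Y ⁻¹' {false}) = μ (Y ⁻¹' {true}) := by
  have hm : MeasurableSet (Y ⁻¹' {true}) := hmY (measurableSet_singleton true)
  have hc : Y ⁻¹' {false} = (Y ⁻¹' {true})ᶜ := by ext; simp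
  rw [hc, prob_compl_eq_one_sub hm, show Y ⁻¹' {true} = {ω | Y ω = true} from rfl, hY,
    one_div, ENNReal.one_sub_inv_two]

theorem integral_sum_filter_mem {Ω ι : Type*} [MeasurableSpace Ω] {μ : Measure Ω}
    [IsFiniteMeasure μ] {s : Finset ι} {A : ι → Set Ω} [∀ i, DecidablePred (· ∈ A i)]
    (hA : ∀ i ∈ s, MeasurableSet (A i)) (c : ι → ℝ) :
    ∫ ω, ∑ i ∈ s with ω ∈ A i, c i ∂μ = ∑ i ∈ s, μ.real (A i) * c i := by
  have h : ∀ ω, ∑ i ∈ s with ω ∈ A i, c i = ∑ i ∈ s, (A i).indicator (fun _ => c i) ω :=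
    fun ω => by simp [sum_filter, Set.indicator_apply]
  simp_rw [h]
  rw [integral_finsetSum _ fun i hi => (integrable_const _).indicator (hA i hi)]
  exact sum_congr rfl fun i hi => integral_indicator_const _ (hA i hi)

section BernoulliSplit

variable {Ω α : Type*} [Fintype α] (M : Matroid α) (w : α → ℝ) (X Y : α → Ω → Bool)

/-- For `w i ≠ 0`, the event `{Xᵢ = 1, i improves S}` with `S = {j : Xⱼ = Yⱼ = 1}`, written so
that it visibly does not involve `Yᵢ`. -/
def improvingEvent (i : α) : Set Ω :=
  {ω | 0 < w i ∧ X i ω = true ∧ i ∈ M.E \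
    M.closure ↑((univ.filter fun j => X j ω = true ∧ Y j ω = true).filter (w i < w ·))}

variable {M w X Y}

theorem improvingEvent_saturated {i : α} {ω ω' : Ω}
    (h : ∀ j ≠ .inr i, Sum.elim X Y j ω = Sum.elim X Y j ω')
    (hω : ω ∈ improvingEvent M w X Y i) : ω' ∈ improvingEvent M w X Y i := by
  have hX : ∀ j, X j ω = X j ω' := fun j => h (.inl j) Sum.inl_ne_inr
  have hY : ∀ j, w i < w j → Y j ω = Y j ω' := fun j hij =>
    h (.inr j) (Sum.inr_injective.ne fun e => hij.ne' (congrArg w e))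
  have hS : (univ.filter fun j => X j ω = true ∧ Y j ω = true).filter (w i < w ·) =
      (univ.filter fun j => X j ω' = true ∧ Y j ω' = true).filter (w i < w ·) := by
    ext j
    by_cases hij : w i < w j
    · simp [hX, hij, hY j hij]
    · simp [hij]
  obtain ⟨hwi, hXi, hcl⟩ := hω
  exact ⟨hwi, hX i ▸ hXi, hS ▸ hcl⟩

theorem sum_improves_eq_sum_filter_improvingEvent [DecidableEq α] (hw : Function.Injective w)
    (ω : Ω) :
    ∑ i ∈ univ with X i ω = true ∧ Y i ω = false ∧
        Improves M w i (univ.filter fun j => X j ω = true ∧ Y j ω = true), w i =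
      ∑ i ∈ univ with ω ∈ improvingEvent M w X Y i ∩ Y i ⁻¹' {false}, w i := by
  refine sum_filter_congr_of_ne_zero fun i _ hwi => ?_
  simp only [improvingEvent, improves_iff_of_ne_zero hw hwi, Set.mem_inter_iff,
    Set.mem_ofPred_eq, Set.mem_preimage, Set.mem_singleton_iff]
  tauto

theorem sum_OPT_eq_sum_filter_improvingEvent (hw : Function.Injective w) (ω : Ω) :
    ∑ i ∈ OPT M w (univ.filter fun j => X j ω = true ∧ Y j ω = true), w i =
      ∑ i ∈ univ with ω ∈ improvingEvent M w X Y i ∩ Y i ⁻¹' {true}, w i := by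
  rw [← univ_inter (OPT _ _ _), ← filter_mem_eq_inter]
  refine sum_filter_congr_of_ne_zero fun i _ hwi => ?_
  simp only [improvingEvent, mem_OPT_iff_of_ne_zero hw hwi, Set.mem_inter_iff,
    Set.mem_ofPred_eq, Set.mem_preimage, Set.mem_singleton_iff, mem_filter, mem_univ, true_and]
  tauto

variable [MeasurableSpace Ω] {μ : Measure Ω}

theorem measurableSet_improvingEvent (hmX : ∀ i, Measurable (X i))
    (hmY : ∀ i, Measurable (Y i)) (i : α) : MeasurableSet (improvingEvent M w X Y i) :=
  measurableSet_of_saturated (fun j => j.rec hmX hmY) fun _ _ => improvingEvent_saturated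

theorem measure_improvingEvent_inter_false_eq_true [IsProbabilityMeasure μ]
    (hmX : ∀ i, Measurable (X i)) (hmY : ∀ i, Measurable (Y i))
    (hindep : iIndepFun (Sum.elim X Y) μ) {i : α} (hY : μ {ω | Y i ω = true} = 1 / 2) :
    μ (improvingEvent M w X Y i ∩ Y i ⁻¹' {false}) =
      μ (improvingEvent M w X Y i ∩ Y i ⁻¹' {true}) := by
  have h := hindep.measure_inter_preimage_eq_mul_of_saturated (fun j => j.rec hmX hmY)
    fun _ _ => improvingEvent_saturated (M := M) (w := w) (i := i)
  simp only [Sum.elim_inr] at h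
  rw [h, h, measure_preimage_false_eq_true (hmY i) hY]

end BernoulliSplit

theorem expected_weight_improving_symmetric_general {Ω : Type*} [MeasurableSpace Ω]
    (μ : Measure Ω) [IsProbabilityMeasure μ] (n : ℕ)
    (M' : Matroid (Fin n))
    (w : Fin n → ℝ) (hwdec : ∀ i j : Fin n, i < j → w j < w i)
    (X Y : Fin n → Ω → Bool)
    (hmX : ∀ i, Measurable (X i)) (hmY : ∀ i, Measurable (Y i))
    (hindep : iIndepFun (Sum.elim X Y) μ)
    (hY : ∀ i, μ {ω | Y i ω = true} = 1 / 2) :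
    (∫ ω, ∑ i ∈ Finset.univ.filter (fun i => X i ω = true ∧ Y i ω = false ∧
        Improves M' w i (Finset.univ.filter (fun j => X j ω = true ∧ Y j ω = true))),
        w i ∂μ) =
    ∫ ω, ∑ i ∈ OPT M' w (Finset.univ.filter (fun j => X j ω = true ∧ Y j ω = true)),
        w i ∂μ := by
  have hw : Function.Injective w := StrictAnti.injective hwdec
  have hmeas : ∀ i b, MeasurableSet (improvingEvent M' w X Y i ∩ Y i ⁻¹' {b}) := fun i b =>
    (measurableSet_improvingEvent hmX hmY i).inter (hmY i (measurableSet_singleton b))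
  simp only [sum_improves_eq_sum_filter_improvingEvent hw,
    sum_OPT_eq_sum_filter_improvingEvent hw]
  rw [integral_sum_filter_mem fun i _ => hmeas i false,
    integral_sum_filter_mem fun i _ => hmeas i true]
  simp only [measureReal_def,
    measure_improvingEvent_inter_false_eq_true hmX hmY hindep (hY _)]

/-- symmetry lemma for improving elements: elements `1, …, n` have
strictly decreasing weights; `X₁, …, Xₙ, Y₁, …, Yₙ` are mutually independent Bernoulli
random variables with `P(Xᵢ = 1) = 2p` and `P(Yᵢ = 1) = 1/2`;
`S = {i : Xᵢ = 1, Yᵢ = 1}` and `T = {i : Xᵢ = 1, Yᵢ = 0}`; `T*` is the set of elements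
of `T` improving `S` w.r.t. the matroid `M'`, and `S* = OPT(S, M')`. Then
`E[w(T*)] = E[w(S*)]`. -/
theorem expected_weight_improving_symmetric {Ω : Type*} [MeasurableSpace Ω]
    (μ : Measure Ω) [IsProbabilityMeasure μ] (n : ℕ)
    (M' : Matroid (Fin n)) (hE : M'.E = Set.univ)
    (w : Fin n → ℝ) (hw0 : ∀ i, 0 ≤ w i) (hwdec : ∀ i j : Fin n, i < j → w j < w i)
    (p : ℝ) (X Y : Fin n → Ω → Bool)
    (hmX : ∀ i, Measurable (X i)) (hmY : ∀ i, Measurable (Y i))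
    (hindep : iIndepFun (Sum.elim X Y) μ)
    (hX : ∀ i, μ {ω | X i ω = true} = ENNReal.ofReal (2 * p))
    (hY : ∀ i, μ {ω | Y i ω = true} = 1 / 2) :
    (∫ ω, ∑ i ∈ Finset.univ.filter (fun i => X i ω = true ∧ Y i ω = false ∧
        Improves M' w i (Finset.univ.filter (fun j => X j ω = true ∧ Y j ω = true))),
        w i ∂μ) =
    ∫ ω, ∑ i ∈ OPT M' w (Finset.univ.filter (fun j => X j ω = true ∧ Y j ω = true)),
        w i ∂μ :=
  expected_weight_improving_symmetric_general μ n M' w hwdec X Y hmX hmY hindep hY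
end
end

section
/- If L = log₂(1/ε(k)) − 2 with ε(k) = C√(log(n)/k), C ≥ 10 and k ≥ 160² log n, then Σ_{ℓ=1}^{L} (1 + ε(r_ℓ)) r_ℓ < k, where r_ℓ = 2^{ℓ−L−1} k and ε(x) = C√(log(n)/x). -/
open Real Finset

lemma geom_aux (x : ℝ) (hx0 : 0 < x) (hx1 : x ≠ 1) (L : ℕ) :
    ∑ ℓ ∈ Finset.Icc 1 L, x ^ ((ℓ : ℤ) - L - 1) = (1 - x ^ (-(L : ℤ))) / (x - 1) := by
  have hxne : x ≠ 0 := hx0.ne'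
  have h1 : ∀ ℓ ∈ Finset.Icc 1 L, x ^ ((ℓ : ℤ) - L - 1) = x ^ ℓ * x ^ (-(L : ℤ) - 1) := by
    intro ℓ _
    rw [← zpow_natCast x ℓ, ← zpow_add₀ hxne]
    ring_nf
  rw [Finset.sum_congr rfl h1, ← Finset.sum_mul]
  have hIcc : Finset.Icc 1 L = Finset.Ico 1 (L + 1) := by
    rw [Finset.Ico_add_one_right_eq_Icc]
  have hsum : ∑ ℓ ∈ Finset.Icc 1 L, x ^ ℓ = x * (x ^ L - 1) / (x - 1) := by
    rw [hIcc, Finset.sum_Ico_eq_sum_range]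
    simp only [Nat.add_sub_cancel]
    have : ∑ i ∈ Finset.range L, x ^ (1 + i) = x * ∑ i ∈ Finset.range L, x ^ i := by
      rw [Finset.mul_sum]
      exact Finset.sum_congr rfl fun i _ => by rw [pow_add, pow_one]
    rw [this, geom_sum_eq hx1, mul_div_assoc]
  rw [hsum]
  have hy : x ^ L ≠ 0 := pow_ne_zero _ hxne
  have hneg1 : x ^ (-(L : ℤ) - 1) = (x * x ^ L)⁻¹ := by
    rw [show -(L : ℤ) - 1 = -((L : ℤ) + 1) by ring, zpow_neg, ← zpow_natCast x L]
    rw [zpow_add₀ hxne, zpow_one, mul_comm]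
  have hnegL : x ^ (-(L : ℤ)) = (x ^ L)⁻¹ := by
    rw [zpow_neg, zpow_natCast]
  rw [hneg1, hnegL]
  have hx1' : x - 1 ≠ 0 := sub_ne_zero.mpr hx1
  field_simp

/-- with `ε(x) = C√(log n / x)`, `r_ℓ = 2^{ℓ-L-1} k` and
`L = log₂(1/ε(k)) - 2` a positive integer, `C ≥ 10` and `k ≥ 160² log n`, the total
capacity `Σ_{ℓ=1}^{L} (1 + ε(r_ℓ)) r_ℓ` is less than `k`. -/
theorem total_capacity_lt_k (n : ℕ) (hn : 2 ≤ n) (C k : ℝ) (hC : 10 ≤ C)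
    (hk : 160 ^ 2 * Real.log n ≤ k) (L : ℕ) (hL : 0 < L)
    (hLdef : (L : ℝ) = Real.logb 2 (1 / (C * Real.sqrt (Real.log n / k))) - 2) :
    ∑ ℓ ∈ Finset.Icc 1 L,
        (1 + C * Real.sqrt (Real.log n / ((2 : ℝ) ^ ((ℓ : ℤ) - L - 1) * k))) *
          ((2 : ℝ) ^ ((ℓ : ℤ) - L - 1) * k) < k := by
  have hn1 : (1 : ℝ) < n := by exact_mod_cast hn
  have hlog : 0 < Real.log n := Real.log_pos hn1
  have hk0 : 0 < k := lt_of_lt_of_le (by positivity) hk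
  set g := Real.sqrt (Real.log n) with hgdef
  set s := Real.sqrt k with hsdef
  set q := Real.sqrt 2 with hqdef
  have hg : 0 < g := Real.sqrt_pos.mpr hlog
  have hs : 0 < s := Real.sqrt_pos.mpr hk0
  have hq0 : 0 < q := Real.sqrt_pos.mpr (by norm_num)
  have hq2 : q ^ 2 = 2 := Real.sq_sqrt (by norm_num)
  have hq : 1 < q := by nlinarith
  have hs2 : s ^ 2 = k := Real.sq_sqrt hk0.le
  have hg2 : g ^ 2 = Real.log n := Real.sq_sqrt hlog.le
  have hC0 : 0 < C := lt_of_lt_of_le (by norm_num) hC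
  -- the key consequence of hLdef : 2^{-L} = 4*C*g/s
  have hdivsqrt : Real.sqrt (Real.log n / k) = g / s := Real.sqrt_div hlog.le k
  have ha0 : 0 < C * Real.sqrt (Real.log n / k) := by
    rw [hdivsqrt]; positivity
  have hlogb : Real.logb 2 (1 / (C * Real.sqrt (Real.log n / k))) = (L : ℝ) + 2 := by
    linarith [hLdef]
  have hrpow : (2 : ℝ) ^ ((L : ℝ) + 2) = 1 / (C * Real.sqrt (Real.log n / k)) := by
    rw [← hlogb]
    exact Real.rpow_logb (by norm_num) (by norm_num) (by positivity)
  have hpow : (2 : ℝ) ^ (L + 2) = 1 / (C * Real.sqrt (Real.log n / k)) := by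
    rw [← hrpow, show ((L : ℝ) + 2) = ((L + 2 : ℕ) : ℝ) by push_cast; ring,
      Real.rpow_natCast]
  have h1 : (2 : ℝ) ^ (L + 2) * (C * (g / s)) = 1 := by
    rw [hpow, ← hdivsqrt]
    field_simp
  have h2L : (2 : ℝ) ^ (-(L : ℤ)) = 4 * C * g / s := by
    have h2 : (2 : ℝ) ^ (-(L : ℤ)) * (2 : ℝ) ^ (L + 2) = 4 := by
      rw [← zpow_natCast (2 : ℝ) (L + 2), ← zpow_add₀ (by norm_num : (2:ℝ) ≠ 0)]
      push_cast
      norm_num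
    have hX : (0:ℝ) < (2 : ℝ) ^ (L + 2) := by positivity
    have hinv : ((2 : ℝ) ^ (L + 2))⁻¹ = C * (g / s) := inv_eq_of_mul_eq_one_right h1
    have h4 : (2 : ℝ) ^ (-(L : ℤ)) = 4 / (2 : ℝ) ^ (L + 2) := by
      rw [eq_div_iff hX.ne']
      linarith [h2]
    rw [h4, div_eq_mul_inv, hinv]
    ring
  -- rewrite each summand
  have hterm : ∀ ℓ ∈ Finset.Icc 1 L,
      (1 + C * Real.sqrt (Real.log n / ((2 : ℝ) ^ ((ℓ : ℤ) - L - 1) * k))) *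
          ((2 : ℝ) ^ ((ℓ : ℤ) - L - 1) * k)
        = (2 : ℝ) ^ ((ℓ : ℤ) - L - 1) * k + C * g * s * q ^ ((ℓ : ℤ) - L - 1) := by
    intro ℓ _
    set e : ℤ := (ℓ : ℤ) - L - 1 with hedef
    have hqe : 0 < q ^ e := zpow_pos hq0 e
    have h2e : (2 : ℝ) ^ e = (q ^ e) ^ 2 := by
      rw [← hq2, pow_two, pow_two, mul_zpow]
    have key : Real.log n / ((2 : ℝ) ^ e * k) = (g / (q ^ e * s)) ^ 2 := by
      rw [div_pow, mul_pow, hg2, hs2, ← h2e]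
    have hsqrt : Real.sqrt (Real.log n / ((2 : ℝ) ^ e * k)) = g / (q ^ e * s) := by
      rw [key, Real.sqrt_sq (div_nonneg hg.le (mul_nonneg hqe.le hs.le))]
    rw [hsqrt, h2e, ← hs2]
    field_simp
  rw [Finset.sum_congr rfl hterm, Finset.sum_add_distrib, ← Finset.sum_mul, ← Finset.mul_sum,
    geom_aux 2 (by norm_num) (by norm_num) L, geom_aux q hq0 (ne_of_gt hq) L]
  -- now a purely arithmetic goal
  have hqL : 0 < q ^ (-(L : ℤ)) := zpow_pos hq0 _
  have hT : (1 - q ^ (-(L : ℤ))) / (q - 1) < 4 := by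
    rw [div_lt_iff₀ (by linarith)]
    nlinarith
  have hcgs : 0 < C * g * s := by positivity
  have hmul : C * g * s * ((1 - q ^ (-(L : ℤ))) / (q - 1)) < C * g * s * 4 :=
    (mul_lt_mul_iff_right₀ hcgs).mpr hT
  have hk2L : (2 : ℝ) ^ (-(L : ℤ)) * k = 4 * C * g * s := by
    rw [h2L, ← hs2]
    field_simp
  have hS2 : (1 - (2:ℝ) ^ (-(L : ℤ))) / (2 - 1) = 1 - (2:ℝ) ^ (-(L : ℤ)) := by norm_num
  rw [hS2]
  nlinarith [hmul, hk2L]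
end
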